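/- For every positive integer n, non-negative integer m, and real q with 0 < q < 1: ∑_{n ≥ k ≥ k_1 ≥ ⋯ ≥ k_m ≥ 1} (-1)^{k+1} q^{k(k-1)/2} C_q(n,k) ∏_{j=1}^m [k_j]_q^{-1} = [n]_q^{-m}. -/

import Mathlib

/-!
Write `c_k = (-1)^{k+1} q^{k(k-1)/2}`. By the `q`-Pascal rule
`C_q(n,k) = q^k C_q(n-1,k) + C_q(n-1,k-1)` and `c_{k+1} = -q^k c_k`, the terms `c_k C_q(n,k)`
telescope, so the tail sums are `∑_{k=j}^n c_k C_q(n,k) = c_j C_q(n-1,j-1) = c_j C_q(n,j) [j]_q/[n]_q`.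
Exchanging the order of summation in the recursion defining the nested sum therefore divides the
whole sum by `[n]_q` each time `m` grows by one, and for `m = 0` the tail sum from `j = 1` is `1`.
-/

/-- Gaussian binomial coefficient, vanishing unless `k ≤ n`. -/
noncomputable def qbinom (q : ℝ) (n k : ℕ) : ℝ :=
  if k ≤ n then ∏ j ∈ Finset.Icc 1 k, (1 - q ^ (n - k + j)) / (1 - q ^ j) else 0

/-- The `q`-analog of a natural number: `[k]_q = (1-q^k)/(1-q)`. -/
noncomputable def qnum (q : ℝ) (k : ℕ) : ℝ := (1 - q ^ k) / (1 - q)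

/-- `∑_{n ≥ k₁ ≥ ⋯ ≥ k_m ≥ 1} ∏_j 1/[k_j]_q`. -/
noncomputable def nestedInvQ (q : ℝ) : ℕ → ℕ → ℝ
  | _, 0 => 1
  | n, m + 1 => ∑ k ∈ Finset.Icc 1 n, (1 / qnum q k) * nestedInvQ q k m

open Finset

variable {q : ℝ}

noncomputable def qPochhammer (q : ℝ) (n : ℕ) : ℝ := ∏ j ∈ Icc 1 n, (1 - q ^ j)

lemma qPochhammer_zero : qPochhammer q 0 = 1 := by simp [qPochhammer]

lemma qPochhammer_succ (n : ℕ) : qPochhammer q (n + 1) = qPochhammer q n * (1 - q ^ (n + 1)) :=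
  prod_Icc_succ_top (by omega) _

lemma qPochhammer_add (a b : ℕ) :
    qPochhammer q (a + b) = qPochhammer q a * ∏ j ∈ Icc 1 b, (1 - q ^ (a + j)) := by
  induction b with
  | zero => simp
  | succ b ih =>
    rw [← add_assoc, qPochhammer_succ, ih, prod_Icc_succ_top (by omega), mul_assoc, ← add_assoc]

noncomputable def qAltCoeff (q : ℝ) (k : ℕ) : ℝ := (-1) ^ (k + 1) * q ^ k.choose 2

lemma qAltCoeff_one : qAltCoeff q 1 = 1 := by simp [qAltCoeff]

lemma qAltCoeff_succ (k : ℕ) : qAltCoeff q (k + 1) = -(q ^ k * qAltCoeff q k) := by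
  rw [qAltCoeff, qAltCoeff, Nat.choose_succ_succ, Nat.choose_one_right, pow_add, pow_succ]
  ring

lemma qbinom_of_lt {n k : ℕ} (h : n < k) : qbinom q n k = 0 := by
  simp [qbinom, Nat.not_le.mpr h]

lemma qbinom_one_right (n : ℕ) : qbinom q n 1 = qnum q n := by
  rcases n with _ | n <;> simp [qbinom, qnum]

section AbsLtOne

variable (hq : |q| < 1)
include hq

lemma one_sub_pow_pos {j : ℕ} (hj : j ≠ 0) : 0 < 1 - q ^ j := by
  have : |q ^ j| < 1 := by rw [abs_pow]; exact pow_lt_one₀ (abs_nonneg q) hq hj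
  linarith [le_abs_self (q ^ j)]

lemma qnum_pos {k : ℕ} (hk : k ≠ 0) : 0 < qnum q k :=
  div_pos (one_sub_pow_pos hq hk) (by simpa using one_sub_pow_pos hq one_ne_zero)

lemma qnum_one : qnum q 1 = 1 := by
  rw [qnum, pow_one]
  exact div_self (by simpa using (one_sub_pow_pos hq one_ne_zero).ne')

lemma qPochhammer_pos (n : ℕ) : 0 < qPochhammer q n :=
  prod_pos fun j hj => one_sub_pow_pos hq (by grind)

lemma qbinom_eq_div {n k : ℕ} (hk : k ≤ n) :
    qbinom q n k = qPochhammer q n / (qPochhammer q k * qPochhammer q (n - k)) := by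
  obtain ⟨d, rfl⟩ : ∃ d, n = d + k := ⟨n - k, by omega⟩
  have := (qPochhammer_pos hq k).ne'
  have := (qPochhammer_pos hq d).ne'
  rw [qbinom, if_pos hk, prod_div_distrib, Nat.add_sub_cancel, ← qPochhammer, qPochhammer_add]
  field_simp

lemma qbinom_self (n : ℕ) : qbinom q n n = 1 := by
  rw [qbinom_eq_div hq le_rfl, Nat.sub_self, qPochhammer_zero, mul_one,
    div_self (qPochhammer_pos hq n).ne']

lemma qbinom_succ_succ {n k : ℕ} (hk : k ≤ n) :
    qbinom q (n + 1) (k + 1) = q ^ (k + 1) * qbinom q n (k + 1) + qbinom q n k := by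
  rcases hk.eq_or_lt with rfl | hkn
  · rw [qbinom_self hq, qbinom_self hq, qbinom_of_lt (by omega), mul_zero, zero_add]
  obtain ⟨d, rfl⟩ : ∃ d, n = k + 1 + d := ⟨n - (k + 1), by omega⟩
  rw [qbinom_eq_div hq (by omega), qbinom_eq_div hq (by omega), qbinom_eq_div hq (by omega),
    show k + 1 + d + 1 - (k + 1) = d + 1 by omega, show k + 1 + d - (k + 1) = d by omega,
    show k + 1 + d - k = d + 1 by omega, qPochhammer_succ, qPochhammer_succ, qPochhammer_succ]
  have := (qPochhammer_pos hq k).ne'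
  have := (qPochhammer_pos hq d).ne'
  have := (one_sub_pow_pos hq k.succ_ne_zero).ne'
  have := (one_sub_pow_pos hq d.succ_ne_zero).ne'
  field_simp
  rw [show k + 1 + d + 1 = k + 1 + (d + 1) by omega, pow_add]
  ring

lemma qbinom_mul_qnum_succ {n k : ℕ} (hk : k ≤ n) :
    qbinom q n k * qnum q (n + 1) = qbinom q (n + 1) (k + 1) * qnum q (k + 1) := by
  obtain ⟨d, rfl⟩ : ∃ d, n = k + d := ⟨n - k, by omega⟩
  rw [qbinom_eq_div hq (by omega), qbinom_eq_div hq (by omega), Nat.add_sub_cancel_left,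
    show k + d + 1 - (k + 1) = d by omega, qPochhammer_succ, qPochhammer_succ, qnum, qnum]
  have := (qPochhammer_pos hq k).ne'
  have := (qPochhammer_pos hq d).ne'
  have := (qPochhammer_pos hq (k + d)).ne'
  have := (one_sub_pow_pos hq k.succ_ne_zero).ne'
  have : 1 - q ≠ 0 := by simpa using (one_sub_pow_pos hq one_ne_zero).ne'
  field_simp

lemma sum_Icc_qAltCoeff_mul_qbinom_succ {n j : ℕ} (hj : 1 ≤ j) (hjn : j ≤ n + 1) :
    ∑ k ∈ Icc j (n + 1), qAltCoeff q k * qbinom q (n + 1) k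
      = qAltCoeff q j * qbinom q n (j - 1) := by
  set g : ℕ → ℝ := fun k => qAltCoeff q k * qbinom q n (k - 1)
  have hterm : ∀ k ∈ Icc j (n + 1), qAltCoeff q k * qbinom q (n + 1) k = -(g (k + 1) - g k) := by
    intro k hk
    obtain ⟨i, rfl⟩ : ∃ i, k = i + 1 := ⟨k - 1, by grind⟩
    simp only [g, qbinom_succ_succ hq (by grind : i ≤ n), qAltCoeff_succ, Nat.add_sub_cancel]
    ring
  rw [sum_congr rfl hterm, sum_neg_distrib, sum_Icc_sub hjn]
  simp [g, qbinom_of_lt]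

lemma sum_Icc_qAltCoeff_mul_qbinom_mul_qnum {n j : ℕ} (hj : 1 ≤ j) (hjn : j ≤ n) :
    (∑ k ∈ Icc j n, qAltCoeff q k * qbinom q n k) * qnum q n
      = qAltCoeff q j * qbinom q n j * qnum q j := by
  obtain ⟨n, rfl⟩ : ∃ n', n = n' + 1 := ⟨n - 1, by omega⟩
  obtain ⟨i, rfl⟩ : ∃ i, j = i + 1 := ⟨j - 1, by omega⟩
  rw [sum_Icc_qAltCoeff_mul_qbinom_succ hq hj hjn, mul_assoc, Nat.add_sub_cancel,
    qbinom_mul_qnum_succ hq (by omega), mul_assoc]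

lemma sum_qAltCoeff_mul_qbinom {n : ℕ} (hn : 1 ≤ n) :
    ∑ k ∈ Icc 1 n, qAltCoeff q k * qbinom q n k = 1 := by
  have h := sum_Icc_qAltCoeff_mul_qbinom_mul_qnum hq le_rfl hn
  rwa [qAltCoeff_one, one_mul, qbinom_one_right, qnum_one hq, mul_one,
    mul_eq_right₀ (qnum_pos hq (by omega)).ne'] at h

lemma sum_qAltCoeff_mul_qbinom_mul_nestedInvQ_succ (n m : ℕ) :
    ∑ k ∈ Icc 1 n, qAltCoeff q k * qbinom q n k * nestedInvQ q k (m + 1)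
      = (∑ k ∈ Icc 1 n, qAltCoeff q k * qbinom q n k * nestedInvQ q k m) / qnum q n := by
  calc ∑ k ∈ Icc 1 n, qAltCoeff q k * qbinom q n k * nestedInvQ q k (m + 1)
      = ∑ k ∈ Icc 1 n, ∑ j ∈ Icc 1 k,
          qAltCoeff q k * qbinom q n k * (1 / qnum q j * nestedInvQ q j m) := by
        simp only [nestedInvQ, mul_sum]
    _ = ∑ j ∈ Icc 1 n, ∑ k ∈ Icc j n,
          qAltCoeff q k * qbinom q n k * (1 / qnum q j * nestedInvQ q j m) :=
        sum_comm' fun k j => by simp only [mem_Icc]; omega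
    _ = ∑ j ∈ Icc 1 n, qAltCoeff q j * qbinom q n j * nestedInvQ q j m / qnum q n := by
        refine sum_congr rfl fun j hj => ?_
        obtain ⟨hj1, hjn⟩ := mem_Icc.mp hj
        have hqj := (qnum_pos hq (by omega : j ≠ 0)).ne'
        have hqn := (qnum_pos hq (by omega : n ≠ 0)).ne'
        rw [← sum_mul, eq_div_iff hqn, mul_right_comm,
          sum_Icc_qAltCoeff_mul_qbinom_mul_qnum hq hj1 hjn]
        field_simp
    _ = _ := (sum_div ..).symm

end AbsLtOne

theorem An_zero_ones (n : ℕ) (hn : 0 < n) (m : ℕ) (q : ℝ) (hq0 : 0 < q) (hq1 : q < 1) :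
    ∑ k ∈ Finset.Icc 1 n,
        (-1 : ℝ) ^ (k + 1) * q ^ (k * (k - 1) / 2) * qbinom q n k * nestedInvQ q k m
    = ((qnum q n)⁻¹) ^ m := by
  have hq : |q| < 1 := abs_lt.mpr ⟨by linarith, hq1⟩
  simp only [← Nat.choose_two_right]
  change ∑ k ∈ Icc 1 n, qAltCoeff q k * qbinom q n k * nestedInvQ q k m = _
  induction m with
  | zero => simpa [nestedInvQ] using sum_qAltCoeff_mul_qbinom hq hn
  | succ m ih => rw [sum_qAltCoeff_mul_qbinom_mul_nestedInvQ_succ hq, ih, pow_succ, div_eq_mul_inv]
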